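/- For the dihedral discrete gradient G and any configurations q, q' such that each of the six primed distances differs from its unprimed counterpart, one has ∑_{u=1}^N (q'_u + q_u) × G_u(q,q') = 0, where × denotes the cross product in ℝ³; in particular G_i + G_j + G_k + G_ℓ = 0. -/

import Mathlib

/-! Put `P = q' + q`. Every `u⃗_{ab}` is a multiple of `P_b − P_a`, so `G` is a superposition of
equal and opposite forces `±c (P_b − P_a)` acting on pairs `a, b`. Such a pair contributes
`(P_b − P_a) × c (P_b − P_a) = 0` to `∑ P_u × G_u`, and cancels in `G_i + G_j + G_k + G_ℓ`. -/

open scoped Matrix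

/-- The Euclidean norm of a vector in `ℝ³`. -/
noncomputable def norm3 (v : Fin 3 → ℝ) : ℝ := Real.sqrt (∑ x, v x ^ 2)

/-- The dihedral discrete gradient (coordinate-increment construction `∇̄^ℓ` in the six
distances `r_{ij}, r_{jk}, r_{kℓ}, r_{ik}, r_{jℓ}, r_{iℓ}`, in this order) associated with
the quadruple `i, j, k, l` and the potential `W`, for the dihedral potential
`V(q) = W(r_{ij}, r_{jk}, r_{kℓ}, r_{ik}, r_{jℓ}, r_{iℓ})`. -/
noncomputable def dihedralDG {N : ℕ} (i j k l : Fin N)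
    (W : ℝ → ℝ → ℝ → ℝ → ℝ → ℝ → ℝ)
    (q q' : Fin N → Fin 3 → ℝ) : Fin N → Fin 3 → ℝ :=
  let rij := norm3 (q j - q i); let rjk := norm3 (q k - q j); let rkl := norm3 (q l - q k)
  let rik := norm3 (q k - q i); let rjl := norm3 (q l - q j); let ril := norm3 (q l - q i)
  let rij' := norm3 (q' j - q' i); let rjk' := norm3 (q' k - q' j)
  let rkl' := norm3 (q' l - q' k); let rik' := norm3 (q' k - q' i)
  let rjl' := norm3 (q' l - q' j); let ril' := norm3 (q' l - q' i)
  let Dij := (W rij' rjk rkl rik rjl ril - W rij rjk rkl rik rjl ril) / (rij' - rij)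
  let Djk := (W rij' rjk' rkl rik rjl ril - W rij' rjk rkl rik rjl ril) / (rjk' - rjk)
  let Dkl := (W rij' rjk' rkl' rik rjl ril - W rij' rjk' rkl rik rjl ril) / (rkl' - rkl)
  let Dik := (W rij' rjk' rkl' rik' rjl ril - W rij' rjk' rkl' rik rjl ril) / (rik' - rik)
  let Djl := (W rij' rjk' rkl' rik' rjl' ril - W rij' rjk' rkl' rik' rjl ril) / (rjl' - rjl)
  let Dil := (W rij' rjk' rkl' rik' rjl' ril' - W rij' rjk' rkl' rik' rjl' ril) / (ril' - ril)
  let uij := (rij' + rij)⁻¹ • ((q' j - q' i) + (q j - q i))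
  let ujk := (rjk' + rjk)⁻¹ • ((q' k - q' j) + (q k - q j))
  let ukl := (rkl' + rkl)⁻¹ • ((q' l - q' k) + (q l - q k))
  let uik := (rik' + rik)⁻¹ • ((q' k - q' i) + (q k - q i))
  let ujl := (rjl' + rjl)⁻¹ • ((q' l - q' j) + (q l - q j))
  let uil := (ril' + ril)⁻¹ • ((q' l - q' i) + (q l - q i))
  fun u =>
    if u = i then -(Dij • uij) - Dik • uik - Dil • uil
    else if u = j then Dij • uij - Djk • ujk - Djl • ujl
    else if u = k then Dik • uik + Djk • ujk - Dkl • ukl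
    else if u = l then Dil • uil + Djl • ujl + Dkl • ukl
    else 0

/-! Put `P = q' + q`. Every `u⃗_{ab}` is a multiple of `P_b − P_a`, so `G` is a superposition of
equal and opposite forces `±c (P_b − P_a)` acting on pairs `a, b`. Such a pair contributes
`(P_b − P_a) × c (P_b − P_a) = 0` to `∑ P_u × G_u`, and cancels in `G_i + G_j + G_k + G_ℓ`. -/

section PairForce

variable {ι : Type*} [DecidableEq ι]

def pairForce {E : Type*} [AddCommGroup E] (a b : ι) (v : E) : ι → E :=
  Pi.single b v - Pi.single a v

theorem pairForce_smul {R E : Type*} [Ring R] [AddCommGroup E] [Module R E]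
    (a b : ι) (t : R) (v : E) : pairForce a b (t • v) = t • pairForce a b v := by
  simp [pairForce, Pi.single_smul, smul_sub]

theorem ite_eq_sum_pairForce {E : Type*} [AddCommGroup E] {i j k l : ι}
    (hij : i ≠ j) (hik : i ≠ k) (hil : i ≠ l) (hjk : j ≠ k) (hjl : j ≠ l) (hkl : k ≠ l)
    (vij vjk vkl vik vjl vil : E) :
    (fun u => if u = i then -vij - vik - vil
      else if u = j then vij - vjk - vjl
      else if u = k then vik + vjk - vkl
      else if u = l then vil + vjl + vkl
      else 0) =
    pairForce i j vij + pairForce j k vjk + pairForce k l vkl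
      + pairForce i k vik + pairForce j l vjl + pairForce i l vil := by
  funext u
  by_cases hi : u = i
  · subst hi; simp [pairForce, hij, hik, hil]; abel
  by_cases hj : u = j
  · subst hj; simp [pairForce, hij.symm, hjk, hjl]; abel
  by_cases hk : u = k
  · subst hk; simp [pairForce, hik.symm, hjk.symm, hkl]; abel
  by_cases hl : u = l
  · subst hl; simp [pairForce, hil.symm, hjl.symm, hkl.symm]; abel
  simp [pairForce, hi, hj, hk, hl]

variable {R : Type*} [CommRing R]

def centralForces (P : ι → Fin 3 → R) : Submodule R (ι → Fin 3 → R) :=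
  Submodule.span R (Set.range fun ab : ι × ι => pairForce ab.1 ab.2 (P ab.2 - P ab.1))

theorem pairForce_smul_sub_mem_centralForces (P : ι → Fin 3 → R) (a b : ι) (t : R) :
    pairForce a b (t • (P b - P a)) ∈ centralForces P := by
  rw [pairForce_smul]
  exact Submodule.smul_mem _ _ (Submodule.subset_span ⟨(a, b), rfl⟩)

variable [Fintype ι]

theorem sum_cross_pairForce (P : ι → Fin 3 → R) (a b : ι) (v : Fin 3 → R) :
    ∑ u, P u ⨯₃ pairForce a b v u = (P b - P a) ⨯₃ v := by
  simp [pairForce, Pi.single_apply, apply_ite (crossProduct _), Finset.sum_sub_distrib]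

theorem sum_cross_eq_zero_of_mem_centralForces {P G : ι → Fin 3 → R}
    (hG : G ∈ centralForces P) : ∑ u, P u ⨯₃ G u = 0 := by
  have hle : centralForces P ≤
      LinearMap.ker (LinearMap.lsum R (fun _ => Fin 3 → R) R fun u => crossProduct (P u)) := by
    rw [centralForces, Submodule.span_le]
    rintro _ ⟨⟨a, b⟩, rfl⟩
    simp [sum_cross_pairForce, cross_self]
  simpa using hle hG

end PairForce

theorem dihedralDG_mem_centralForces {N : ℕ} {i j k l : Fin N}
    (hij : i ≠ j) (hik : i ≠ k) (hil : i ≠ l) (hjk : j ≠ k) (hjl : j ≠ l) (hkl : k ≠ l)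
    (W : ℝ → ℝ → ℝ → ℝ → ℝ → ℝ → ℝ) (q q' : Fin N → Fin 3 → ℝ) :
    dihedralDG i j k l W q q' ∈ centralForces (q' + q) := by
  have hpair : ∀ a b (s t : ℝ),
      pairForce a b (s • t • ((q' b - q' a) + (q b - q a))) ∈ centralForces (q' + q) := by
    intro a b s t
    rw [smul_smul, show (q' b - q' a) + (q b - q a) = (q' + q) b - (q' + q) a by
      simp only [Pi.add_apply]; abel]
    exact pairForce_smul_sub_mem_centralForces _ a b _
  simp only [dihedralDG]
  rw [ite_eq_sum_pairForce hij hik hil hjk hjl hkl]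
  exact add_mem (add_mem (add_mem (add_mem (add_mem (hpair _ _ _ _) (hpair _ _ _ _))
    (hpair _ _ _ _)) (hpair _ _ _ _)) (hpair _ _ _ _)) (hpair _ _ _ _)

theorem dihedralDG_cross_sum_eq_zero_general {N : ℕ} (i j k l : Fin N)
    (hij : i ≠ j) (hik : i ≠ k) (hil : i ≠ l)
    (hjk : j ≠ k) (hjl : j ≠ l) (hkl : k ≠ l)
    (W : ℝ → ℝ → ℝ → ℝ → ℝ → ℝ → ℝ) (q q' : Fin N → Fin 3 → ℝ) :
    (∑ u, (q' u + q u) ⨯₃ dihedralDG i j k l W q q' u = 0) ∧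
    dihedralDG i j k l W q q' i + dihedralDG i j k l W q q' j
      + dihedralDG i j k l W q q' k + dihedralDG i j k l W q q' l = 0 := by
  refine ⟨sum_cross_eq_zero_of_mem_centralForces
    (dihedralDG_mem_centralForces hij hik hil hjk hjl hkl W q q'), ?_⟩
  simp only [dihedralDG, if_neg hij.symm, if_neg hik.symm, if_neg hjk.symm,
    if_neg hil.symm, if_neg hjl.symm, if_neg hkl.symm, if_true]
  abel

/-- For the dihedral discrete gradient `G` one has `∑ u, (q'_u + q_u) × G_u(q,q') = 0`;
in particular `G_i + G_j + G_k + G_ℓ = 0`. -/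
theorem dihedralDG_cross_sum_eq_zero {N : ℕ} (i j k l : Fin N)
    (hij : i ≠ j) (hik : i ≠ k) (hil : i ≠ l)
    (hjk : j ≠ k) (hjl : j ≠ l) (hkl : k ≠ l)
    (W : ℝ → ℝ → ℝ → ℝ → ℝ → ℝ → ℝ) (q q' : Fin N → Fin 3 → ℝ)
    (h1 : norm3 (q' j - q' i) ≠ norm3 (q j - q i))
    (h2 : norm3 (q' k - q' j) ≠ norm3 (q k - q j))
    (h3 : norm3 (q' l - q' k) ≠ norm3 (q l - q k))
    (h4 : norm3 (q' k - q' i) ≠ norm3 (q k - q i))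
    (h5 : norm3 (q' l - q' j) ≠ norm3 (q l - q j))
    (h6 : norm3 (q' l - q' i) ≠ norm3 (q l - q i)) :
    (∑ u, (q' u + q u) ⨯₃ dihedralDG i j k l W q q' u = 0) ∧
    dihedralDG i j k l W q q' i + dihedralDG i j k l W q q' j
      + dihedralDG i j k l W q q' k + dihedralDG i j k l W q q' l = 0 :=
  dihedralDG_cross_sum_eq_zero_general i j k l hij hik hil hjk hjl hkl W q q'
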